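/- The group G_3^2, defined as the presented group with generators a, b, c, relators the squares of all generators, and relators (x_{σ(1)} x_{σ(2)} x_{σ(3)})² for every permutation σ of the three generators, is isomorphic to the presented group ⟨a,b,c | a² = b² = c² = 1, (abc)² = 1⟩ via the map sending each generator to the generator of the same name; that is, the single relation (abc)² = 1 implies all the tetrahedron relations. -/
import Mathlib

/-- The full set of relators of `G_3^2`: the squares of the three generators together with
`(x_{σ(1)} x_{σ(2)} x_{σ(3)})²` for every permutation `σ` of the three generators. -/
def relsFull : Set (FreeGroup (Fin 3)) :=
  (Set.range fun i : Fin 3 => FreeGroup.of i ^ 2) ∪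
    (Set.range fun σ : Equiv.Perm (Fin 3) =>
      ((List.ofFn fun j : Fin 3 => FreeGroup.of (σ j)).prod) ^ 2)

/-- The reduced set of relators: `a², b², c², (abc)²`. -/
def relsRed : Set (FreeGroup (Fin 3)) :=
  {FreeGroup.of 0 ^ 2, FreeGroup.of 1 ^ 2, FreeGroup.of 2 ^ 2,
    (FreeGroup.of 0 * FreeGroup.of 1 * FreeGroup.of 2) ^ 2}

section key
variable {G : Type*} [Group G] {a b c : G}

lemma key_bca (_ha : a * a = 1) (h : (a * b * c) ^ 2 = 1) : (b * c * a) ^ 2 = 1 := by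
  have : (b * c * a) ^ 2 = a⁻¹ * ((a * b * c) ^ 2) * a := by simp [pow_two, mul_assoc]
  rw [this, h]; group

lemma key_inv (ha : a * a = 1) (hb : b * b = 1) (hc : c * c = 1)
    (h : (a * b * c) ^ 2 = 1) : (c * b * a) ^ 2 = 1 := by
  have ha' : a⁻¹ = a := inv_eq_of_mul_eq_one_right ha
  have hb' : b⁻¹ = b := inv_eq_of_mul_eq_one_right hb
  have hc' : c⁻¹ = c := inv_eq_of_mul_eq_one_right hc
  have : c * b * a = (a * b * c)⁻¹ := by
    simp [mul_inv_rev, ha', hb', hc', mul_assoc]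
  rw [this, inv_pow, h, inv_one]

lemma key_all (ha : a * a = 1) (hb : b * b = 1) (hc : c * c = 1)
    (h : (a * b * c) ^ 2 = 1) :
    (a*b*c)^2 = 1 ∧ (b*c*a)^2 = 1 ∧ (c*a*b)^2 = 1 ∧
    (a*c*b)^2 = 1 ∧ (b*a*c)^2 = 1 ∧ (c*b*a)^2 = 1 := by
  have h2 : (b*c*a)^2 = 1 := key_bca ha h
  have h3 : (c*a*b)^2 = 1 := key_bca hb h2
  refine ⟨h, h2, h3, ?_, ?_, key_inv ha hb hc h⟩
  · exact key_inv hb hc ha h2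
  · exact key_inv hc ha hb h3
lemma perm_sq (f : Fin 3 → G) (h0 : f 0 * f 0 = 1) (h1 : f 1 * f 1 = 1)
    (h2 : f 2 * f 2 = 1) (h : (f 0 * f 1 * f 2) ^ 2 = 1) :
    ∀ x y z : Fin 3, x ≠ y → x ≠ z → y ≠ z → (f x * f y * f z) ^ 2 = 1 := by
  obtain ⟨k1, k2, k3, k4, k5, k6⟩ := key_all h0 h1 h2 h
  intro x y z hxy hxz hyz
  fin_cases x <;> fin_cases y <;> fin_cases z <;> simp_all
end key

/-- The group `G_3^2` (with all tetrahedron relators) is isomorphic to the presented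
group `⟨a,b,c | a² = b² = c² = 1, (abc)² = 1⟩` via the map sending each generator to the
generator of the same name. -/
theorem stmt_16 : ∃ e : PresentedGroup relsFull ≃* PresentedGroup relsRed,
    ∀ i : Fin 3,
      e (PresentedGroup.of (rels := relsFull) i) = PresentedGroup.of (rels := relsRed) i := by
  have hset : Subgroup.normalClosure relsFull = Subgroup.normalClosure relsRed := by
    apply le_antisymm
    · apply Subgroup.normalClosure_le_normal
      rintro x (⟨i, rfl⟩ | ⟨σ, rfl⟩)
      · apply Subgroup.subset_normalClosure
        fin_cases i <;> simp [relsRed]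
      · rw [SetLike.mem_coe, ← QuotientGroup.eq_one_iff (N := Subgroup.normalClosure relsRed)]
        set mk := QuotientGroup.mk' (Subgroup.normalClosure relsRed) with hmk
        have hrel : ∀ w ∈ relsRed, mk w = 1 := fun w hw =>
          (QuotientGroup.eq_one_iff w).mpr (Subgroup.subset_normalClosure hw)
        have h0 : mk (FreeGroup.of 0) * mk (FreeGroup.of 0) = 1 := by
          have := hrel _ (by simp [relsRed] : FreeGroup.of 0 ^ 2 ∈ relsRed)
          simpa [sq] using this
        have h1 : mk (FreeGroup.of 1) * mk (FreeGroup.of 1) = 1 := by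
          have := hrel _ (by simp [relsRed] : FreeGroup.of 1 ^ 2 ∈ relsRed)
          simpa [sq] using this
        have h2 : mk (FreeGroup.of 2) * mk (FreeGroup.of 2) = 1 := by
          have := hrel _ (by simp [relsRed] : FreeGroup.of 2 ^ 2 ∈ relsRed)
          simpa [sq] using this
        have habc : (mk (FreeGroup.of 0) * mk (FreeGroup.of 1) * mk (FreeGroup.of 2)) ^ 2 = 1 := by
          have := hrel _ (by simp [relsRed] :
            (FreeGroup.of 0 * FreeGroup.of 1 * FreeGroup.of 2) ^ 2 ∈ relsRed)
          simpa using this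
        show mk _ = 1
        rw [map_pow]
        simp only [List.ofFn_succ, List.ofFn_zero, List.prod_cons, List.prod_nil,
          map_mul, map_one, mul_one]
        exact perm_sq (fun i => mk (FreeGroup.of i)) h0 h1 h2 habc _ _ _
          (σ.injective.ne (by decide)) (σ.injective.ne (by decide))
          (σ.injective.ne (by decide))
    · apply Subgroup.normalClosure_le_normal
      rintro x (rfl | rfl | rfl | rfl) <;> apply Subgroup.subset_normalClosure
      · exact Or.inl ⟨0, rfl⟩
      · exact Or.inl ⟨1, rfl⟩
      · exact Or.inl ⟨2, rfl⟩
      · refine Or.inr ⟨1, ?_⟩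
        simp [List.ofFn_succ]
        ring_nf
        rfl
  exact ⟨QuotientGroup.quotientMulEquivOfEq hset, fun i => rfl⟩
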